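/- Let X be a random variable with E(X) = 0, E(X²) = 1, and E|X|³ < ∞. Then for λ = 1, θ = 2, b = x/√n with x, n > 0: E[exp(b·X − 2(b·X)²)] ≤ 1 − n⁻¹x² + C·n^{-3/2}x³·E|X|³ for an absolute constant C > 0. -/
import Mathlib

lemma shao_key (t : ℝ) : Real.exp (t - 2*t^2) ≤ 1 + t - t^2 + 100 * |t|^3 := by
  have ha0 : (0:ℝ) ≤ |t| := abs_nonneg t
  have hta : t ≤ |t| := le_abs_self t
  have hta' : -|t| ≤ t := neg_abs_le t
  have hsq : |t|^2 = t^2 := sq_abs t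
  have hc1 : t^3 ≤ |t|^3 := by
    calc t^3 ≤ |t^3| := le_abs_self _
    _ = |t|^3 := abs_pow t 3
  have hc2 : -|t|^3 ≤ t^3 := by
    have : |t^3| = |t|^3 := abs_pow t 3
    have := neg_abs_le (t^3)
    linarith [neg_abs_le (t^3), (abs_pow t 3) ▸ neg_abs_le (t^3)]
  have habs2 : |2*t^2| = 2*t^2 := abs_of_nonneg (by positivity)
  have h2 : |t - 2*t^2| ≤ |t| + 2*t^2 := by
    calc |t - 2*t^2| ≤ |t| + |2*t^2| := abs_sub _ _
    _ = |t| + 2*t^2 := by rw [habs2]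
  by_cases h : |t| ≤ 1/4
  · have hu : |t - 2*t^2| ≤ 1 := by nlinarith
    have hb := Real.exp_bound hu (n := 3) (by norm_num)
    have hsum : ∑ m ∈ Finset.range 3, (t - 2*t^2) ^ m / (m.factorial : ℝ)
        = 1 + (t - 2*t^2) + (t - 2*t^2)^2 / 2 := by
      simp [Finset.sum_range_succ, Nat.factorial]
    rw [hsum] at hb
    norm_num [Nat.factorial] at hb
    have h1 : Real.exp (t - 2*t^2)
        ≤ 1 + (t - 2*t^2) + (t - 2*t^2)^2 / 2 + |t - 2*t^2|^3 * (2/9) := by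
      have := (abs_le.mp hb).2
      linarith
    have hmid : |t - 2*t^2| ≤ (3/2) * |t| := by nlinarith
    have h3' : |t - 2*t^2|^3 ≤ (27/8) * |t|^3 := by
      calc |t - 2*t^2|^3 ≤ ((3/2)*|t|)^3 := pow_le_pow_left₀ (abs_nonneg _) hmid 3
      _ = 27/8 * |t|^3 := by ring
    have hq : t^4 = |t|^4 := by
      have h' : (|t|^2)^2 = (t^2)^2 := by rw [hsq]
      nlinarith [h']
    have ht4 : t^4 ≤ |t|^3 / 4 := by
      nlinarith [mul_nonneg (pow_nonneg ha0 3) (by linarith : (0:ℝ) ≤ 1/4 - |t|)]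
    nlinarith [h1, h3', hc2, ht4, sq_nonneg t]
  · push_neg at h
    have h1 : Real.exp (t - 2*t^2) ≤ Real.exp (1/8) := by
      apply Real.exp_le_exp.mpr; nlinarith
    have h2' : Real.exp (1/8 : ℝ) ≤ 1 + 1/8 + 3/256 := by
      have hu : |(1/8 : ℝ)| ≤ 1 := by rw [abs_of_nonneg (by norm_num)]; norm_num
      have hb := Real.exp_bound hu (n := 2) (by norm_num)
      have hsum : ∑ m ∈ Finset.range 2, ((1:ℝ)/8) ^ m / (m.factorial : ℝ) = 1 + 1/8 := by
        simp [Finset.sum_range_succ, Nat.factorial]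
      rw [hsum] at hb
      norm_num [Nat.factorial] at hb
      have := (abs_le.mp hb).2
      linarith
    have hs : (0:ℝ) ≤ |t| - 1/4 := by linarith
    have h4 : 1 + 1/8 + 3/256 ≤ 1 + t - t^2 + 100 * |t|^3 := by
      nlinarith [mul_nonneg (mul_nonneg hs hs) hs, mul_nonneg hs hs, hs]
    linarith

open MeasureTheory

theorem shao_mgf_expansion_special :
    ∃ C : ℝ, 0 < C ∧
      ∀ {Ω : Type} [MeasurableSpace Ω] (μ : Measure Ω), IsProbabilityMeasure μ →
      ∀ (X : Ω → ℝ), Measurable X →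
        Integrable X μ → Integrable (fun ω => (X ω) ^ 2) μ →
        Integrable (fun ω => |X ω| ^ 3) μ →
        (∫ ω, X ω ∂μ) = 0 → (∫ ω, (X ω) ^ 2 ∂μ) = 1 →
        ∀ x n : ℝ, 0 < x → 0 < n →
          ∫ ω, Real.exp ((x / Real.sqrt n) * X ω - 2 * ((x / Real.sqrt n) * X ω) ^ 2) ∂μ
            ≤ 1 - x ^ 2 / n + C * x ^ 3 / n ^ (3 / 2 : ℝ) * ∫ ω, |X ω| ^ 3 ∂μ := by
  refine ⟨100, by norm_num, ?_⟩
  intro Ω _ μ hμ X hXm hX1 hX2 hX3 hEX hEX2 x n hx hn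
  set b : ℝ := x / Real.sqrt n with hbdef
  have hbpos : 0 < b := div_pos hx (Real.sqrt_pos.mpr hn)
  -- integrability pieces
  have hI1 : Integrable (fun ω => b * X ω) μ := hX1.const_mul b
  have hI2 : Integrable (fun ω => b ^ 2 * (X ω) ^ 2) μ := hX2.const_mul _
  have hI3 : Integrable (fun ω => 100 * b ^ 3 * |X ω| ^ 3) μ := hX3.const_mul _
  have hg : Integrable (fun ω => 1 + b * X ω - b ^ 2 * (X ω) ^ 2 + 100 * b ^ 3 * |X ω| ^ 3) μ :=
    (((integrable_const 1).add hI1).sub hI2).add hI3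
  -- pointwise bound
  have hpt : ∀ ω, Real.exp (b * X ω - 2 * (b * X ω) ^ 2)
      ≤ 1 + b * X ω - b ^ 2 * (X ω) ^ 2 + 100 * b ^ 3 * |X ω| ^ 3 := by
    intro ω
    have hk := shao_key (b * X ω)
    have e1 : (b * X ω) ^ 2 = b ^ 2 * (X ω) ^ 2 := by ring
    have e2 : |b * X ω| ^ 3 = b ^ 3 * |X ω| ^ 3 := by
      rw [abs_mul, abs_of_pos hbpos]; ring
    refine le_trans hk (le_of_eq ?_)
    rw [e2]; ring
  -- integrability of the exponential
  have hfmeas : Measurable (fun ω => Real.exp (b * X ω - 2 * (b * X ω) ^ 2)) := by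
    fun_prop
  have hf : Integrable (fun ω => Real.exp (b * X ω - 2 * (b * X ω) ^ 2)) μ := by
    refine (integrable_const (3:ℝ)).mono' hfmeas.aestronglyMeasurable ?_
    filter_upwards with ω
    rw [Real.norm_eq_abs, abs_of_pos (Real.exp_pos _)]
    have h1 : b * X ω - 2 * (b * X ω) ^ 2 ≤ 1/8 := by nlinarith [sq_nonneg (b * X ω - 1/4)]
    calc Real.exp (b * X ω - 2 * (b * X ω) ^ 2) ≤ Real.exp 1 := Real.exp_le_exp.mpr (by linarith)
    _ ≤ 3 := by linarith [Real.exp_one_lt_d9.le]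
  -- integrate
  have hmono := integral_mono hf hg hpt
  have hIa : Integrable (fun ω => 1 + b * X ω) μ := (integrable_const 1).add hI1
  have hIb : Integrable (fun ω => 1 + b * X ω - b ^ 2 * (X ω) ^ 2) μ := hIa.sub hI2
  have hcomp : ∫ ω, (1 + b * X ω - b ^ 2 * (X ω) ^ 2 + 100 * b ^ 3 * |X ω| ^ 3) ∂μ
      = 1 + b * (∫ ω, X ω ∂μ) - b ^ 2 * (∫ ω, (X ω) ^ 2 ∂μ)
        + 100 * b ^ 3 * (∫ ω, |X ω| ^ 3 ∂μ) := by
    rw [integral_add hIb hI3, integral_sub hIa hI2, integral_add (integrable_const 1) hI1,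
        integral_const, integral_const_mul, integral_const_mul, integral_const_mul]
    simp [measure_univ]
  rw [hcomp, hEX, hEX2] at hmono
  have hb2 : b ^ 2 = x ^ 2 / n := by
    rw [hbdef, div_pow, Real.sq_sqrt hn.le]
  have hsn3 : (Real.sqrt n) ^ (3:ℕ) = n ^ ((3:ℝ)/2) := by
    rw [Real.sqrt_eq_rpow, ← Real.rpow_natCast (n ^ ((1:ℝ)/2)) 3, ← Real.rpow_mul hn.le]
    norm_num
  have hb3 : b ^ 3 = x ^ 3 / n ^ ((3:ℝ)/2) := by
    rw [hbdef, div_pow, hsn3]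
  calc ∫ ω, Real.exp (b * X ω - 2 * (b * X ω) ^ 2) ∂μ
      ≤ 1 + b * 0 - b ^ 2 * 1 + 100 * b ^ 3 * (∫ ω, |X ω| ^ 3 ∂μ) := hmono
  _ = 1 - x ^ 2 / n + 100 * x ^ 3 / n ^ (3 / 2 : ℝ) * ∫ ω, |X ω| ^ 3 ∂μ := by
      rw [hb2, hb3]; ring
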